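/- arXiv:1605.08599 — 2 statements merged into one kernel-verified Lean document; each statement's English description precedes it below -/
import Mathlib

section
/- Let G be an abelian group (written additively) viewed as a ℤ-module, let F = {g_1, …, g_l} ⊆ G be a finite set such that m·f ≠ 0 for every nonzero f ∈ F ∪ (F − F) and every m ∈ ℕ, and let K ∈ ℕ. Then there exist a finite set Q ⊆ G and an integer M ≥ 1 such that for every coloring k: G → {1, …, K}, there are g' ∈ Q and m ∈ {1, …, M} with k(g' + m g_1) = k(g' + m g_2) = ⋯ = k(g' + m g_l). -/
/-!
Gallai's theorem gives every finite coloring of `G` a monochromatic homothetic copy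
`b + a • range g`. For a fixed base and scale this is a condition on finitely many values of
the coloring, hence open in the compact space of colorings `G → C` (with `C` discrete), so
finitely many pairs `(b, a)` already serve every coloring.
-/

open Set
open scoped Pointwise

theorem isOpen_setOf_forall_apply_eq_apply {X C ι : Type*} [TopologicalSpace C]
    [DiscreteTopology C] [Finite ι] (x : ι → X) :
    IsOpen {k : X → C | ∀ i j, k (x i) = k (x j)} := by
  simp only [ofPred_forall]
  exact isOpen_iInter_of_finite fun i => isOpen_iInter_of_finite fun j =>
    (isOpen_discrete {p : C × C | p.1 = p.2}).preimage (f := fun k : X → C => (k (x i), k (x j)))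
      ((continuous_apply _).prodMk (continuous_apply _))

theorem exists_mono_homothetic_copy_range {M C ι : Type*} [AddCommMonoid M] [Finite C]
    [Fintype ι] (g : ι → M) (k : M → C) :
    ∃ p : M × ℕ+, ∀ i j, k (p.1 + (p.2 : ℕ) • g i) = k (p.1 + (p.2 : ℕ) • g j) := by
  classical
  obtain ⟨a, ha, b, c, hmono⟩ := Combinatorics.exists_mono_homothetic_copy (Finset.univ.image g) k
  refine ⟨(b, ⟨a, ha⟩), fun i j => ?_⟩
  simp only [PNat.mk_coe, add_comm b, hmono _ (Finset.mem_image_of_mem g (Finset.mem_univ _))]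

theorem exists_finset_forall_exists_mono_homothetic {M C ι : Type*} [AddCommMonoid M]
    [Finite C] [Fintype ι] (g : ι → M) :
    ∃ P : Finset (M × ℕ+), ∀ k : M → C, ∃ p ∈ P,
      ∀ i j, k (p.1 + (p.2 : ℕ) • g i) = k (p.1 + (p.2 : ℕ) • g j) := by
  let _ : TopologicalSpace C := ⊥
  have : DiscreteTopology C := ⟨rfl⟩
  obtain ⟨P, hP⟩ := isCompact_univ.elim_finite_subcover
    (fun p : M × ℕ+ =>
      {k : M → C | ∀ i j, k (p.1 + (p.2 : ℕ) • g i) = k (p.1 + (p.2 : ℕ) • g j)})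
    (fun p => isOpen_setOf_forall_apply_eq_apply (fun i => p.1 + (p.2 : ℕ) • g i))
    (fun k _ => mem_iUnion.2 (exists_mono_homothetic_copy_range g k))
  exact ⟨P, fun k => by simpa using hP (mem_univ k)⟩

theorem stmt5_general
    {G : Type*} [AddCommGroup G] (l : ℕ) (g : Fin l → G)
    (K : ℕ) :
    ∃ (Q : Finset G) (M : ℕ), 1 ≤ M ∧ ∀ k : G → Fin K,
      ∃ g' ∈ Q, ∃ m : ℕ, 1 ≤ m ∧ m ≤ M ∧
        ∀ i j : Fin l, k (g' + m • g i) = k (g' + m • g j) := by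
  classical
  obtain ⟨P, hP⟩ := exists_finset_forall_exists_mono_homothetic (C := Fin K) g
  refine ⟨P.image Prod.fst, P.sup (fun p => (p.2 : ℕ)) ⊔ 1, le_sup_right, fun k => ?_⟩
  obtain ⟨p, hp, hmono⟩ := hP k
  exact ⟨p.1, Finset.mem_image_of_mem _ hp, p.2, p.2.pos,
    le_sup_of_le_left (Finset.le_sup (f := fun p : G × ℕ+ => (p.2 : ℕ)) hp), hmono⟩

theorem stmt5
    {G : Type*} [AddCommGroup G] (l : ℕ) (g : Fin l → G)
    (hirr : ∀ f ∈ Set.range g ∪ (Set.range g - Set.range g), f ≠ 0 →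
      ∀ m : ℕ, 0 < m → m • f ≠ 0)
    (K : ℕ) :
    ∃ (Q : Finset G) (M : ℕ), 1 ≤ M ∧ ∀ k : G → Fin K,
      ∃ g' ∈ Q, ∃ m : ℕ, 1 ≤ m ∧ m ≤ M ∧
        ∀ i j : Fin l, k (g' + m • g i) = k (g' + m • g j) :=
  stmt5_general l g K
end

section
/- Let G be a countable abelian group and F = {g_1, …, g_l} ⊆ G a finite subset. For any K ∈ ℕ and any finite coloring k: G → {1, …, K}, there exist g_0 ∈ G and a nonzero integer r such that k(g_0 + r g_1) = k(g_0 + r g_2) = ⋯ = k(g_0 + r g_l). -/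
theorem stmt6_general
    {G : Type*} [AddCommGroup G] (l : ℕ) (g : Fin l → G)
    (K : ℕ) (k : G → Fin K) :
    ∃ (g₀ : G) (r : ℤ), r ≠ 0 ∧ ∀ i j : Fin l, k (g₀ + r • g i) = k (g₀ + r • g j) := by
  classical
  obtain ⟨a, ha, b, c, hc⟩ :=
    Combinatorics.exists_mono_homothetic_copy (Finset.univ.image g) k
  have hmono : ∀ i, k (b + (a : ℤ) • g i) = c := fun i => by
    rw [natCast_zsmul, add_comm]
    exact hc _ (Finset.mem_image_of_mem g (Finset.mem_univ i))
  exact ⟨b, a, by exact_mod_cast ha.ne', fun i j => (hmono i).trans (hmono j).symm⟩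

theorem stmt6
    {G : Type*} [AddCommGroup G] [Countable G] (l : ℕ) (g : Fin l → G)
    (htf : ∀ x ∈ AddSubgroup.closure (Set.range g), x ≠ 0 → ∀ r : ℤ, r ≠ 0 → r • x ≠ 0)
    (K : ℕ) (k : G → Fin K) :
    ∃ (g₀ : G) (r : ℤ), r ≠ 0 ∧ ∀ i j : Fin l, k (g₀ + r • g i) = k (g₀ + r • g j) :=
  stmt6_general l g K k
end
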